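/- arXiv:2106.06211 — 4 statements merged into one kernel-verified Lean document; each statement's English description precedes it below -/
import Mathlib

section
/- If u : ℝ^n → ℝ is the quadratic polynomial u(x) = xᵀAx for a positive definite symmetric matrix A, then the reverse isoperimetric quantity I(u) = liminf_{t→∞} (∫_{Ω_t} |Du|) / (∫_{Ω_t} |t - u|^{n/(n-1)})^{(n-1)/n} is finite, where Ω_t = {x : u(x) < t}. -/
open MeasureTheory Filter Set

/-!
Writing `u x = ⟪A x, x⟫`, positive definiteness and compactness of the unit sphere give
`m ‖x‖² ≤ u x ≤ ‖A‖ ‖x‖²` with `m > 0`, and `Du(x) = 2Ax` is `O(‖x‖)`. So `Ω_t` lies in a ball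
of radius `≍ √t` on which `|Du| = O(√t)`, and the numerator is `O(t^((n+1)/2))`; and `Ω_t`
contains a ball of radius `≍ √t` on which `t - u ≥ t/2`, so the integral in the denominator is
at least a multiple of `t^(n/(n-1) + n/2)`. Raised to the power `(n-1)/n` this is again of order
`t^((n+1)/2)`, so the quotient stays bounded for all `t > 0`.
-/

open Metric Module

section InnerProduct

variable {E : Type*} [NormedAddCommGroup E] [InnerProductSpace ℝ E]

namespace ContinuousLinearMap

theorem reApplyInnerSelf_le_norm_mul_sq (T : E →L[ℝ] E) (x : E) :
    T.reApplyInnerSelf x ≤ ‖T‖ * ‖x‖ ^ 2 :=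
  calc T.reApplyInnerSelf x = inner ℝ (T x) x := T.reApplyInnerSelf_apply x
    _ ≤ ‖T x‖ * ‖x‖ := real_inner_le_norm _ _
    _ ≤ ‖T‖ * ‖x‖ * ‖x‖ := by gcongr; exact T.le_opNorm x
    _ = ‖T‖ * ‖x‖ ^ 2 := by ring

theorem exists_pos_mul_norm_sq_le_reApplyInnerSelf [FiniteDimensional ℝ E] (T : E →L[ℝ] E)
    (hT : ∀ x ≠ 0, 0 < T.reApplyInnerSelf x) :
    ∃ m > 0, ∀ x, m * ‖x‖ ^ 2 ≤ T.reApplyInnerSelf x := by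
  rcases subsingleton_or_nontrivial E with hE | hE
  · exact ⟨1, one_pos, fun x => by simp [Subsingleton.elim x 0, T.reApplyInnerSelf_apply]⟩
  obtain ⟨x₀, hx₀, hmin⟩ := (isCompact_sphere (0 : E) 1).exists_isMinOn
    (NormedSpace.sphere_nonempty.2 zero_le_one) T.reApplyInnerSelf_continuous.continuousOn
  refine ⟨_, hT x₀ (ne_zero_of_mem_sphere one_ne_zero ⟨x₀, hx₀⟩), fun x => ?_⟩
  rcases eq_or_ne x 0 with rfl | hx
  · simp [T.reApplyInnerSelf_apply]
  have hunit : ‖x‖⁻¹ • x ∈ sphere (0 : E) 1 := by simp [norm_smul, hx]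
  calc T.reApplyInnerSelf x₀ * ‖x‖ ^ 2 ≤ T.reApplyInnerSelf (‖x‖⁻¹ • x) * ‖x‖ ^ 2 := by
        gcongr; exact hmin hunit
    _ = T.reApplyInnerSelf x := by
        rw [T.reApplyInnerSelf_smul, norm_inv, norm_norm]
        field_simp

end ContinuousLinearMap

namespace LinearMap.IsSymmetric

variable [CompleteSpace E] {T : E →L[ℝ] E}

theorem hasGradientAt_reApplyInnerSelf (hT : (T : E →ₗ[ℝ] E).IsSymmetric) (x : E) :
    HasGradientAt T.reApplyInnerSelf ((2 : ℝ) • T x) x := by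
  rw [hasGradientAt_iff_hasFDerivAt]
  refine (hT.hasStrictFDerivAt_reApplyInnerSelf x).hasFDerivAt.congr_fderiv ?_
  ext y
  simp [two_smul]

theorem norm_gradient_reApplyInnerSelf_le (hT : (T : E →ₗ[ℝ] E).IsSymmetric) (x : E) :
    ‖gradient T.reApplyInnerSelf x‖ ≤ 2 * ‖T‖ * ‖x‖ := by
  rw [(hT.hasGradientAt_reApplyInnerSelf x).gradient, norm_smul, Real.norm_two, mul_assoc]
  gcongr
  exact T.le_opNorm x

end LinearMap.IsSymmetric

end InnerProduct

namespace Matrix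

variable {ι : Type*} [Fintype ι] [DecidableEq ι] (A : Matrix ι ι ℝ)

theorem reApplyInnerSelf_toEuclideanCLM (x : EuclideanSpace ℝ ι) :
    (toEuclideanCLM (𝕜 := ℝ) A).reApplyInnerSelf x = ∑ i, ∑ j, A i j * x i * x j := by
  rw [ContinuousLinearMap.reApplyInnerSelf_apply, RCLike.re_to_real, real_inner_comm,
    inner_toEuclideanCLM]
  simp only [dotProduct, mulVec, Finset.mul_sum]
  exact Finset.sum_congr rfl fun i _ => Finset.sum_congr rfl fun j _ => by ring

theorem PosDef.reApplyInnerSelf_toEuclideanCLM_pos {A : Matrix ι ι ℝ} (hA : A.PosDef)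
    {x : EuclideanSpace ℝ ι} (hx : x ≠ 0) : 0 < (toEuclideanCLM (𝕜 := ℝ) A).reApplyInnerSelf x := by
  rw [ContinuousLinearMap.reApplyInnerSelf_apply, RCLike.re_to_real, real_inner_comm,
    inner_toEuclideanCLM]
  simpa using hA.dotProduct_mulVec_pos (x := WithLp.ofLp x) (by simpa using hx)

end Matrix

section Sublevel

variable {E : Type*} [NormedAddCommGroup E] {u : E → ℝ}

theorem setOf_lt_subset_ball_sqrt {m t : ℝ} (hm : 0 < m) (hu : ∀ x, m * ‖x‖ ^ 2 ≤ u x) :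
    {x | u x < t} ⊆ ball 0 √(t / m) := fun x hx =>
  mem_ball_zero_iff.2 <| (Real.lt_sqrt (norm_nonneg x)).2 <|
    (lt_div_iff₀' hm).2 ((hu x).trans_lt hx)

theorem ball_sqrt_subset_setOf_lt {M t : ℝ} (hM : 0 < M) (hu : ∀ x, u x ≤ M * ‖x‖ ^ 2) :
    ball 0 √(t / M) ⊆ {x | u x < t} := fun x hx =>
  (hu x).trans_lt <| (lt_div_iff₀' hM).1 <|
    (Real.lt_sqrt (norm_nonneg x)).1 (mem_ball_zero_iff.1 hx)

end Sublevel

theorem div_rpow_le_of_le_mul_rpow {N D C₁ C₂ ρ a b q : ℝ} (hρ : 0 < ρ) (hC₁ : 0 ≤ C₁)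
    (hC₂ : 0 < C₂) (hq : 0 ≤ q) (hbq : b * q = a) (hN : N ≤ C₁ * ρ ^ a)
    (hD : C₂ * ρ ^ b ≤ D) : N / D ^ q ≤ C₁ / C₂ ^ q := by
  have hDq : C₂ ^ q * ρ ^ a ≤ D ^ q :=
    calc C₂ ^ q * ρ ^ a = (C₂ * ρ ^ b) ^ q := by
          rw [Real.mul_rpow hC₂.le (by positivity), ← Real.rpow_mul hρ.le, hbq]
      _ ≤ D ^ q := Real.rpow_le_rpow (by positivity) hD hq
  calc N / D ^ q ≤ C₁ * ρ ^ a / (C₂ ^ q * ρ ^ a) :=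
        div_le_div₀ (by positivity) hN (by positivity) hDq
    _ = C₁ / C₂ ^ q := mul_div_mul_right _ _ (by positivity)

theorem liminf_ofReal_lt_top_of_eventually_le {α : Type*} {l : Filter α} [l.NeBot] {f : α → ℝ}
    {C : ℝ} (h : ∀ᶠ t in l, f t ≤ C) : liminf (fun t => ENNReal.ofReal (f t)) l < ⊤ :=
  calc liminf (fun t => ENNReal.ofReal (f t)) l ≤ liminf (fun _ => ENNReal.ofReal C) l :=
        liminf_le_liminf (h.mono fun _ ht => ENNReal.ofReal_le_ofReal ht)
    _ < ⊤ := by rw [liminf_const]; exact ENNReal.ofReal_lt_top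

section AddHaar

variable {E : Type*} [NormedAddCommGroup E] [NormedSpace ℝ E] [FiniteDimensional ℝ E]
  [MeasurableSpace E] [BorelSpace E] (μ : Measure E) [μ.IsAddHaarMeasure]

theorem MeasureTheory.Measure.addHaar_real_ball_of_pos (x : E) {r : ℝ} (hr : 0 < r) :
    μ.real (ball x r) = r ^ finrank ℝ E * μ.real (ball 0 1) := by
  rw [measureReal_def, μ.addHaar_ball_of_pos x hr, ENNReal.toReal_mul,
    ENNReal.toReal_ofReal (by positivity), measureReal_def]

theorem setIntegral_norm_le_of_subset_ball {F : Type*} [NormedAddCommGroup F] {g : E → F}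
    {s : Set E} {L R : ℝ} (hL : 0 ≤ L) (hR : 0 < R) (hs : s ⊆ ball 0 R)
    (hg : ∀ x, ‖g x‖ ≤ L * ‖x‖) :
    ∫ x in s, ‖g x‖ ∂μ ≤ L * R ^ (finrank ℝ E + 1) * μ.real (ball 0 1) := by
  have hbound : ∀ x ∈ s, ‖‖g x‖‖ ≤ L * R := fun x hx => by
    rw [norm_norm]
    exact (hg x).trans (mul_le_mul_of_nonneg_left (mem_ball_zero_iff.1 (hs hx)).le hL)
  calc ∫ x in s, ‖g x‖ ∂μ ≤ L * R * μ.real s := (le_abs_self _).trans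
        (norm_setIntegral_le_of_norm_le_const ((measure_mono hs).trans_lt measure_ball_lt_top)
          hbound)
    _ ≤ L * R * μ.real (ball 0 R) := by gcongr; exact measure_ball_lt_top.ne
    _ = L * R ^ (finrank ℝ E + 1) * μ.real (ball 0 1) := by
        rw [μ.addHaar_real_ball_of_pos 0 hR]; ring

theorem le_setIntegral_of_ball_subset {h : E → ℝ} {s : Set E} {a r : ℝ} (hr : 0 < r)
    (hh : ∀ x, 0 ≤ h x) (hint : IntegrableOn h s μ) (hs : ball 0 r ⊆ s)
    (ha : ∀ x ∈ ball (0 : E) r, a ≤ h x) :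
    a * r ^ finrank ℝ E * μ.real (ball 0 1) ≤ ∫ x in s, h x ∂μ :=
  calc a * r ^ finrank ℝ E * μ.real (ball 0 1) = a * μ.real (ball (0 : E) r) := by
        rw [μ.addHaar_real_ball_of_pos 0 hr]; ring
    _ ≤ ∫ x in ball 0 r, h x ∂μ := setIntegral_ge_of_const_le_real measurableSet_ball
        measure_ball_lt_top.ne ha (hint.mono_set hs)
    _ ≤ ∫ x in s, h x ∂μ := setIntegral_mono_set hint (Eventually.of_forall hh) hs.eventuallyLE

theorem le_setIntegral_abs_sub_rpow {u : E → ℝ} {m M p t : ℝ} (hu : Continuous u)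
    (hm : 0 < m) (hM : 0 < M) (hp : 0 ≤ p) (ht : 0 < t) (hlow : ∀ x, m * ‖x‖ ^ 2 ≤ u x)
    (hup : ∀ x, u x ≤ M * ‖x‖ ^ 2) :
    (t / 2) ^ p * √(t / 2 / M) ^ finrank ℝ E * μ.real (ball 0 1) ≤
      ∫ x in {x | u x < t}, |t - u x| ^ p ∂μ := by
  have hinner : ball 0 √(t / 2 / M) ⊆ {x | u x < t / 2} := ball_sqrt_subset_setOf_lt hM hup
  have hint : IntegrableOn (fun x => |t - u x| ^ p) {x | u x < t} μ :=
    ((continuous_const.sub hu).abs.rpow_const fun _ => Or.inr hp).continuousOn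
      |>.integrableOn_compact (isCompact_closedBall 0 √(t / m)) |>.mono_set
      ((setOf_lt_subset_ball_sqrt hm hlow).trans ball_subset_closedBall)
  refine le_setIntegral_of_ball_subset μ (by positivity) (fun _ => by positivity) hint
    (hinner.trans fun x (hx : u x < t / 2) => show u x < t by linarith) fun x hx => ?_
  have hux : u x < t / 2 := hinner hx
  have hu0 : 0 ≤ u x := (by positivity : 0 ≤ m * ‖x‖ ^ 2).trans (hlow x)
  gcongr
  rw [abs_of_pos (by linarith)]
  linarith

theorem exists_forall_setIntegral_norm_div_rpow_le {F : Type*} [NormedAddCommGroup F]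
    {u : E → ℝ} {g : E → F} {m M L p q : ℝ} (hu : Continuous u) (hm : 0 < m) (hM : 0 < M)
    (hL : 0 ≤ L) (hlow : ∀ x, m * ‖x‖ ^ 2 ≤ u x) (hup : ∀ x, u x ≤ M * ‖x‖ ^ 2)
    (hg : ∀ x, ‖g x‖ ≤ L * ‖x‖) (hp : 0 ≤ p) (hq : 0 ≤ q)
    (hpq : (2 * p + finrank ℝ E) * q = finrank ℝ E + 1) :
    ∃ C, ∀ t > 0, (∫ x in {x | u x < t}, ‖g x‖ ∂μ) /
      (∫ x in {x | u x < t}, |t - u x| ^ p ∂μ) ^ q ≤ C := by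
  set d := finrank ℝ E
  set b := μ.real (ball (0 : E) 1)
  have hb : 0 < b := ENNReal.toReal_pos (measure_ball_pos μ 0 one_pos).ne' measure_ball_lt_top.ne
  refine ⟨L * b / √m ^ (d + 1) / (b / 2 ^ p / √(2 * M) ^ d) ^ q, fun t ht => ?_⟩
  have hρ : 0 < √t := Real.sqrt_pos.2 ht
  refine div_rpow_le_of_le_mul_rpow hρ (by positivity) (by positivity) hq hpq ?_ ?_
  · calc (∫ x in {x | u x < t}, ‖g x‖ ∂μ) ≤ L * √(t / m) ^ (d + 1) * b :=
          setIntegral_norm_le_of_subset_ball μ hL (by positivity)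
            (setOf_lt_subset_ball_sqrt hm hlow) hg
      _ = L * b / √m ^ (d + 1) * √t ^ ((d : ℝ) + 1) := by
          rw [Real.sqrt_div' _ hm.le, ← Nat.cast_add_one, Real.rpow_natCast]; ring
  · calc b / 2 ^ p / √(2 * M) ^ d * √t ^ (2 * p + d) = (t / 2) ^ p * √(t / 2 / M) ^ d * b := by
          rw [Real.rpow_add hρ, Real.rpow_natCast, Real.rpow_mul hρ.le, Real.rpow_two,
            Real.sq_sqrt ht.le, Real.div_rpow ht.le zero_le_two, div_div t 2 M,
            Real.sqrt_div' _ (by positivity)]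
          ring
      _ ≤ ∫ x in {x | u x < t}, |t - u x| ^ p ∂μ :=
          le_setIntegral_abs_sub_rpow μ hu hm hM hp ht hlow hup

end AddHaar

theorem reverse_isoperimetric_of_quadratic (n : ℕ) (hn : 2 ≤ n)
    (A : Matrix (Fin n) (Fin n) ℝ) (hA : A.PosDef)
    (u : EuclideanSpace ℝ (Fin n) → ℝ)
    (hu : ∀ x, u x = ∑ i, ∑ j, A i j * x i * x j) :
    Filter.liminf (fun t : ℝ => ENNReal.ofReal
      ((∫ x in {x | u x < t}, ‖gradient u x‖) /
        (∫ x in {x | u x < t}, |t - u x| ^ ((n : ℝ) / (n - 1))) ^ (((n : ℝ) - 1) / n)))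
      Filter.atTop < ⊤ := by
  set T := Matrix.toEuclideanCLM (𝕜 := ℝ) A
  have hT : (T : EuclideanSpace ℝ (Fin n) →ₗ[ℝ] _).IsSymmetric :=
    Matrix.isSymmetric_toEuclideanLin_iff.2 hA.isHermitian
  obtain rfl : u = T.reApplyInnerSelf :=
    funext fun x => (hu x).trans (A.reApplyInnerSelf_toEuclideanCLM x).symm
  obtain ⟨m, hm, hlow⟩ :=
    T.exists_pos_mul_norm_sq_le_reApplyInnerSelf fun _ => hA.reApplyInnerSelf_toEuclideanCLM_pos
  have hn1 : (0 : ℝ) < n - 1 := by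
    have : (2 : ℝ) ≤ n := by exact_mod_cast hn
    linarith
  obtain ⟨C, hC⟩ := exists_forall_setIntegral_norm_div_rpow_le volume
    T.reApplyInnerSelf_continuous hm (by positivity : 0 < ‖T‖ + 1) (by positivity)
    hlow (fun x => (T.reApplyInnerSelf_le_norm_mul_sq x).trans (by gcongr; linarith))
    hT.norm_gradient_reApplyInnerSelf_le (by positivity) (by positivity)
    (p := n / (n - 1)) (q := (n - 1) / n)
    (by rw [finrank_euclideanSpace_fin]; field_simp; ring)
  exact liminf_ofReal_lt_top_of_eventually_le ((eventually_gt_atTop 0).mono hC)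
end

section
/- Suppose the Dirichlet problem S_k(D²u) = 1 on a convex domain Ω containing 0, with u(0)=0, Du(0)=0, u = 1 on ∂Ω, admits a smooth convex solution u, and suppose Ω satisfies the γ-ball condition γ^{-1}B_R(x₀) ⊂ Ω ⊂ γB_R(x₀). Then R ≤ C(n,k)·γ, where C(n,k) = sqrt(2n/α) with α = n·(C(n,k choose))^{-1/k}. -/
open MeasureTheory Filter Bornology Metric Set
open scoped RealInnerProductSpace ENNReal

noncomputable section
set_option maxHeartbeats 1000000

/-- Hessian matrix of `u` at `x`. -/
def hess {n : ℕ} (u : EuclideanSpace ℝ (Fin n) → ℝ) (x : EuclideanSpace ℝ (Fin n)) :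
    Matrix (Fin n) (Fin n) ℝ :=
  fun i j => iteratedFDeriv ℝ 2 u x ![EuclideanSpace.single i 1, EuclideanSpace.single j 1]

/-- `k`-th elementary symmetric function of the eigenvalues of a matrix,
computed as the sum of its principal `k × k` minors. -/
def Smat {n : ℕ} (k : ℕ) (M : Matrix (Fin n) (Fin n) ℝ) : ℝ :=
  ∑ s ∈ Finset.univ.powersetCard k, (M.submatrix (Subtype.val : s → Fin n) Subtype.val).det

/-! ### Auxiliary lemmas -/

lemma snd_deriv_nonpos_of_localMax' {g g' g'' : ℝ → ℝ}
    (h1 : ∀ t, HasDerivAt g (g' t) t) (h2 : ∀ t, HasDerivAt g' (g'' t) t)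
    (hcont : Continuous g'') (hmax : IsLocalMax g 0) : g'' 0 ≤ 0 := by
  by_contra hpos
  push_neg at hpos
  have hopen : {x : ℝ | 0 < g'' x} ∈ nhds (0:ℝ) :=
    (isOpen_lt continuous_const hcont).mem_nhds hpos
  obtain ⟨δ, hδ, hball⟩ := Metric.eventually_nhds_iff.1 hopen
  obtain ⟨ε, hε, hmaxball⟩ := Metric.eventually_nhds_iff.1 hmax
  have hr0 : 0 < min δ ε := lt_min hδ hε
  set r := min δ ε with hr
  have hd : deriv g = g' := funext fun t => (h1 t).deriv
  have hd2 : deriv g' = g'' := funext fun t => (h2 t).deriv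
  have hconv : StrictConvexOn ℝ (Ioo (-r) r) g := by
    apply strictConvexOn_of_deriv2_pos (convex_Ioo _ _)
      (Continuous.continuousOn (Differentiable.continuous fun t => (h1 t).differentiableAt))
    intro x hx
    rw [interior_Ioo] at hx
    have : deriv^[2] g x = g'' x := by
      simp only [Function.iterate_succ, Function.iterate_zero, Function.comp_apply, id_eq,
        Function.iterate_one, hd, hd2]
    rw [this]
    apply hball
    rw [Real.dist_eq, sub_zero]
    exact (abs_lt.2 ⟨hx.1, hx.2⟩).trans_le (min_le_left _ _)
  have h₁ : (-(r/2) : ℝ) ∈ Ioo (-r) r := by constructor <;> nlinarith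
  have h₂ : ((r/2) : ℝ) ∈ Ioo (-r) r := by constructor <;> nlinarith
  have key := hconv.2 h₁ h₂ (by intro h; nlinarith : (-(r/2):ℝ) ≠ r/2)
    (by norm_num : (0:ℝ) < 1/2) (by norm_num : (0:ℝ) < 1/2) (by norm_num)
  have habs : ∀ y : ℝ, |y| < ε → g y ≤ g 0 := fun y hy =>
    hmaxball (by rwa [Real.dist_eq, sub_zero])
  have m1 : g (-(r/2)) ≤ g 0 := habs _
    (by rw [abs_neg, abs_of_nonneg (by linarith)]; have := min_le_right δ ε; linarith)
  have m2 : g (r/2) ≤ g 0 := habs _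
    (by rw [abs_of_nonneg (by linarith)]; have := min_le_right δ ε; linarith)
  have e0 : (1/2 : ℝ) • (-(r/2)) + (1/2:ℝ) • (r/2) = (0:ℝ) := by
    simp only [smul_eq_mul]; ring
  rw [e0] at key
  simp only [smul_eq_mul] at key
  linarith

lemma snd_deriv_nonneg_of_convex' {g g' g'' : ℝ → ℝ} {δ₀ : ℝ} (hδ₀ : 0 < δ₀)
    (h1 : ∀ t, HasDerivAt g (g' t) t) (h2 : ∀ t, HasDerivAt g' (g'' t) t)
    (hcont : Continuous g'') (hconv : ConvexOn ℝ (Ioo (-δ₀) δ₀) g) : 0 ≤ g'' 0 := by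
  by_contra hneg
  push_neg at hneg
  have hopen : {x : ℝ | g'' x < 0} ∈ nhds (0:ℝ) :=
    (isOpen_lt hcont continuous_const).mem_nhds hneg
  obtain ⟨δ, hδ, hball⟩ := Metric.eventually_nhds_iff.1 hopen
  have hr0 : 0 < min δ δ₀ := lt_min hδ hδ₀
  set r := min δ δ₀ with hr
  have hd : deriv g = g' := funext fun t => (h1 t).deriv
  have hd2 : deriv g' = g'' := funext fun t => (h2 t).deriv
  have hconc : StrictConcaveOn ℝ (Ioo (-r) r) g := by
    apply strictConcaveOn_of_deriv2_neg (convex_Ioo _ _)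
      (Continuous.continuousOn (Differentiable.continuous fun t => (h1 t).differentiableAt))
    intro x hx
    rw [interior_Ioo] at hx
    have : deriv^[2] g x = g'' x := by
      simp only [Function.iterate_succ, Function.iterate_zero, Function.comp_apply, id_eq,
        Function.iterate_one, hd, hd2]
    rw [this]
    apply hball
    rw [Real.dist_eq, sub_zero]
    exact (abs_lt.2 ⟨hx.1, hx.2⟩).trans_le (min_le_left _ _)
  have h₁ : (-(r/2) : ℝ) ∈ Ioo (-r) r := by constructor <;> nlinarith
  have h₂ : ((r/2) : ℝ) ∈ Ioo (-r) r := by constructor <;> nlinarith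
  have h₁' : (-(r/2) : ℝ) ∈ Ioo (-δ₀) δ₀ := by
    have hmr := min_le_right δ δ₀; constructor <;> nlinarith
  have h₂' : ((r/2) : ℝ) ∈ Ioo (-δ₀) δ₀ := by
    have hmr := min_le_right δ δ₀; constructor <;> nlinarith
  have key := hconc.2 h₁ h₂ (by intro h; nlinarith : (-(r/2):ℝ) ≠ r/2)
    (by norm_num : (0:ℝ) < 1/2) (by norm_num : (0:ℝ) < 1/2) (by norm_num)
  have key2 := hconv.2 h₁' h₂' (by norm_num : (0:ℝ) ≤ 1/2) (by norm_num : (0:ℝ) ≤ 1/2)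
    (by norm_num)
  simp only [smul_eq_mul] at key key2
  linarith

lemma det_le_pow_of_quadform {m : Type*} [Fintype m] [DecidableEq m]
    {N : Matrix m m ℝ} (hN : N.PosSemidef) {c : ℝ}
    (hbound : ∀ x : m → ℝ, dotProduct x (N.mulVec x) ≤ c * dotProduct x x) :
    N.det ≤ c ^ (Fintype.card m) := by
  have hdet := hN.1.det_eq_prod_eigenvalues
  have heig : ∀ i, hN.1.eigenvalues i ≤ c := by
    intro i
    have hv := hN.1.eigenvalues_eq i
    set v : EuclideanSpace ℝ m := hN.1.eigenvectorBasis i with hvdef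
    have hnorm : ‖v‖ = 1 := hN.1.eigenvectorBasis.orthonormal.1 i
    have hdot : dotProduct (⇑v) (⇑v) = 1 := by
      have h2 : ⟪v, v⟫ = (1:ℝ) := by
        rw [real_inner_self_eq_norm_mul_norm, hnorm]; norm_num
      rw [← h2]
      simp [PiLp.inner_apply, dotProduct, mul_comm]
      rw [EuclideanSpace.norm_sq_eq]; simp [Real.norm_eq_abs, sq]
    have hb := hbound ⇑v
    rw [hdot, mul_one] at hb
    rw [hv]
    simpa using hb
  calc N.det = ∏ i, hN.1.eigenvalues i := by rw [hdet]; norm_num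
    _ ≤ ∏ _i : m, c := Finset.prod_le_prod (fun i _ => hN.eigenvalues_nonneg i) (fun i _ => heig i)
    _ = c ^ (Fintype.card m) := by rw [Finset.prod_const, Finset.card_univ]

lemma u_le_one {E : Type*} [NormedAddCommGroup E] [NormedSpace ℝ E]
    {Ω : Set E} (hΩo : IsOpen Ω) (hΩb : IsBounded Ω)
    (h0Ω : (0:E) ∈ Ω) {u : E → ℝ} (hconv : ConvexOn ℝ (closure Ω) u)
    (h0 : u 0 = 0) (hbd : ∀ x ∈ frontier Ω, u x = 1) :
    ∀ x ∈ closure Ω, u x ≤ 1 := by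
  intro x hx
  by_cases hxf : x ∈ frontier Ω
  · exact (hbd x hxf).le
  have hxΩ : x ∈ Ω := by
    by_contra hmem
    exact hxf (by rw [hΩo.frontier_eq]; exact ⟨hx, hmem⟩)
  by_cases hx0 : x = 0
  · rw [hx0, h0]; norm_num
  have hxn : 0 < ‖x‖ := norm_pos_iff.2 hx0
  set S : Set ℝ := {t : ℝ | t • x ∈ closure Ω} with hS
  have h1S : (1:ℝ) ∈ S := by simp [hS, subset_closure hxΩ]
  have hSc : IsClosed S := IsClosed.preimage (continuous_id.smul continuous_const) isClosed_closure
  obtain ⟨C, hC⟩ := (hΩb.closure).subset_closedBall 0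
  have hSb : BddAbove S := by
    refine ⟨C / ‖x‖, fun t ht => ?_⟩
    have := hC ht
    rw [mem_closedBall_zero_iff, norm_smul, Real.norm_eq_abs] at this
    rw [div_eq_mul_inv]
    calc t ≤ |t| := le_abs_self t
      _ ≤ C * ‖x‖⁻¹ := by
        rw [← mul_le_mul_iff_of_pos_right hxn, inv_mul_cancel_right₀ hxn.ne']; exact this
  set T := sSup S with hT
  have hTS : T ∈ S := hSc.csSup_mem ⟨1, h1S⟩ hSb
  have hT1 : 1 ≤ T := le_csSup hSb h1S
  have hTf : T • x ∈ frontier Ω := by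
    rw [hΩo.frontier_eq, mem_diff]
    refine ⟨hTS, fun hmem => ?_⟩
    have hcont : Continuous (fun t : ℝ => t • x) := continuous_id.smul continuous_const
    have : (fun t : ℝ => t • x) ⁻¹' Ω ∈ nhds T := (hΩo.preimage hcont).mem_nhds hmem
    obtain ⟨ε, hε, hball⟩ := Metric.eventually_nhds_iff.1 this
    have : (T + ε/2) ∈ S := by
      have : (T + ε/2) • x ∈ Ω :=
        hball (by rw [Real.dist_eq, add_sub_cancel_left, abs_of_nonneg (by linarith)]; linarith)
      exact subset_closure this
    have := le_csSup hSb this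
    linarith
  have hu1 : u (T • x) = 1 := hbd _ hTf
  have h0c : (0:E) ∈ closure Ω := subset_closure h0Ω
  have hTc : T • x ∈ closure Ω := hTS
  have hT0 : 0 < T := by linarith
  have key := hconv.2 h0c hTc (by rw [sub_nonneg, div_le_one hT0]; exact hT1 : (0:ℝ) ≤ 1 - 1/T)
    (by positivity : (0:ℝ) ≤ 1/T) (by ring)
  rw [smul_zero, zero_add, smul_smul, one_div, inv_mul_cancel₀ hT0.ne', one_smul] at key
  rw [h0, hu1] at key
  simp only [smul_eq_mul, mul_zero, mul_one, zero_add] at key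
  calc u x ≤ 1/T := by rw [one_div]; exact key
    _ ≤ 1 := by rw [div_le_one hT0]; exact hT1

theorem radius_estimate (n k : ℕ) (hn : 2 ≤ n) (hk : 1 ≤ k) (hkn : k ≤ n)
    (Ω : Set (EuclideanSpace ℝ (Fin n))) (hΩo : IsOpen Ω) (hΩc : Convex ℝ Ω)
    (hΩb : IsBounded Ω) (h0Ω : (0 : EuclideanSpace ℝ (Fin n)) ∈ Ω)
    (u : EuclideanSpace ℝ (Fin n) → ℝ) (hu : ContDiff ℝ (⊤ : ℕ∞) u)
    (hconv : ConvexOn ℝ (closure Ω) u)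
    (heq : ∀ x ∈ Ω, Smat k (hess u x) = 1)
    (h0 : u 0 = 0) (hg : gradient u 0 = 0)
    (hbd : ∀ x ∈ frontier Ω, u x = 1)
    (γ R : ℝ) (x₀ : EuclideanSpace ℝ (Fin n)) (hγ : 1 ≤ γ) (hR : 0 < R)
    (hball₁ : Metric.ball x₀ (γ⁻¹ * R) ⊆ Ω) (hball₂ : Ω ⊆ Metric.ball x₀ (γ * R)) :
    R ≤ Real.sqrt (2 * n / ((n : ℝ) * (n.choose k : ℝ) ^ (-(1 : ℝ) / k))) * γ := by
  classical
  have hγ0 : (0:ℝ) < γ := lt_of_lt_of_le one_pos hγ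
  set r : ℝ := γ⁻¹ * R with hrdef
  have hr0 : 0 < r := by positivity
  have hchoose : (0:ℝ) < (n.choose k : ℝ) := by
    exact_mod_cast Nat.choose_pos hkn
  set a : ℝ := (n.choose k : ℝ) ^ (-(1 : ℝ) / k) with hadef
  have ha0 : 0 < a := Real.rpow_pos_of_pos hchoose _
  -- basic facts
  have hucont : Continuous u := hu.continuous
  have hdiff : Differentiable ℝ u := hu.differentiable (by simp)
  have hF : ContDiff ℝ (⊤ : ℕ∞) (fderiv ℝ u) := hu.fderiv_right (by simp)
  have hFdiff : Differentiable ℝ (fderiv ℝ u) := hF.differentiable (by simp)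
  have hH : Continuous (fderiv ℝ (fderiv ℝ u)) := hF.continuous_fderiv (by simp)
  have hsub : closedBall x₀ r ⊆ closure Ω := by
    rw [← closure_ball x₀ hr0.ne']
    exact closure_mono hball₁
  have hle1 := u_le_one hΩo hΩb h0Ω hconv h0 hbd
  -- derivatives along lines
  have hline : ∀ (z e : EuclideanSpace ℝ (Fin n)) (t : ℝ), HasDerivAt (fun s : ℝ => z + s • e) e t := by
    intro z e t; simpa using ((hasDerivAt_id t).smul_const e).const_add z
  have hd1 : ∀ (z e : EuclideanSpace ℝ (Fin n)) (t : ℝ),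
      HasDerivAt (fun s : ℝ => u (z + s • e)) (fderiv ℝ u (z + t • e) e) t := by
    intro z e t
    exact ((hdiff (z + t • e)).hasFDerivAt).comp_hasDerivAt t (hline z e t)
  have hd2 : ∀ (z e : EuclideanSpace ℝ (Fin n)) (t : ℝ),
      HasDerivAt (fun s : ℝ => fderiv ℝ u (z + s • e) e)
        (fderiv ℝ (fderiv ℝ u) (z + t • e) e e) t := by
    intro z e t
    have h3 : HasDerivAt (fun s : ℝ => fderiv ℝ u (z + s • e))
        (fderiv ℝ (fderiv ℝ u) (z + t • e) e) t :=
      ((hFdiff (z + t • e)).hasFDerivAt).comp_hasDerivAt t (hline z e t)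
    have := h3.clm_apply (hasDerivAt_const t e)
    simpa using this
  have hcont2 : ∀ (z e : EuclideanSpace ℝ (Fin n)), Continuous (fun t : ℝ => fderiv ℝ (fderiv ℝ u) (z + t • e) e e) := by
    intro z e
    have hc : Continuous (fun t : ℝ => z + t • e) :=
      continuous_const.add (continuous_id.smul continuous_const)
    exact ((hH.comp hc).clm_apply continuous_const).clm_apply continuous_const
  -- positive semidefiniteness of the Hessian quadratic form on Ω
  have hpsd : ∀ z ∈ Ω, ∀ e : EuclideanSpace ℝ (Fin n), 0 ≤ fderiv ℝ (fderiv ℝ u) z e e := by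
    intro z hz e
    obtain ⟨δ', hδ', hball⟩ := Metric.isOpen_iff.1 hΩo z hz
    set δ₀ : ℝ := δ' / (‖e‖ + 1) with hδ₀def
    have hδ₀ : 0 < δ₀ := by positivity
    have hmem : ∀ t : ℝ, t ∈ Ioo (-δ₀) δ₀ → z + t • e ∈ Ω := by
      intro t ht
      apply hball
      rw [mem_ball_iff_norm]
      have : ‖z + t • e - z‖ = |t| * ‖e‖ := by
        rw [add_sub_cancel_left, norm_smul, Real.norm_eq_abs]
      rw [this]
      have h1 : |t| < δ₀ := abs_lt.2 ⟨ht.1, ht.2⟩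
      have h2 : ‖e‖ < ‖e‖ + 1 := by linarith
      calc |t| * ‖e‖ ≤ |t| * (‖e‖ + 1) := by
            apply mul_le_mul_of_nonneg_left (by linarith) (abs_nonneg t)
        _ < δ₀ * (‖e‖ + 1) := by
            apply mul_lt_mul_of_pos_right h1 (by positivity)
        _ = δ' := by rw [hδ₀def]; field_simp
    have hgconv : ConvexOn ℝ (Ioo (-δ₀) δ₀) (fun t : ℝ => u (z + t • e)) := by
      have haff : ConvexOn ℝ ((AffineMap.lineMap z (z + e) : ℝ →ᵃ[ℝ] EuclideanSpace ℝ (Fin n)) ⁻¹' (closure Ω))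
          (u ∘ (AffineMap.lineMap z (z + e) : ℝ →ᵃ[ℝ] EuclideanSpace ℝ (Fin n))) :=
        hconv.comp_affineMap _
      have hsubset : Ioo (-δ₀) δ₀ ⊆ (AffineMap.lineMap z (z + e) : ℝ →ᵃ[ℝ] EuclideanSpace ℝ (Fin n)) ⁻¹' (closure Ω) := by
        intro t ht
        simp only [mem_preimage, AffineMap.lineMap_apply, vsub_eq_sub, vadd_eq_add,
          add_sub_cancel_left]
        have h2 : t • e + z = z + t • e := by abel
        rw [h2]
        exact subset_closure (hmem t ht)
      have h3 := haff.subset hsubset (convex_Ioo _ _)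
      convert h3 using 1
      funext t
      simp only [Function.comp_apply, AffineMap.lineMap_apply, vsub_eq_sub, vadd_eq_add,
        add_sub_cancel_left]
      congr 1
      abel
    have h8 := snd_deriv_nonneg_of_convex' hδ₀ (hd1 z e) (hd2 z e) (hcont2 z e) hgconv
    simpa using h8
  -- key estimate via barrier functions
  have hkey : ∀ ε : ℝ, 0 < ε → ε < a → u x₀ ≤ 1 - (a - ε)/2 * r^2 := by
    intro ε hε hεa
    set c : ℝ := a - ε with hcdef
    have hc0 : 0 < c := by simp only [hcdef]; linarith
    set w : EuclideanSpace ℝ (Fin n) → ℝ := fun y => u y - (c/2 * (‖y - x₀‖^2 - r^2) + 1) with hwdef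
    have hwcont : Continuous w := by
      apply hucont.sub
      apply Continuous.add _ continuous_const
      apply Continuous.mul continuous_const
      exact ((continuous_id.sub continuous_const).norm.pow 2).sub continuous_const
    obtain ⟨z, hzK, hzmax⟩ := (isCompact_closedBall x₀ r).exists_isMaxOn
      ⟨x₀, mem_closedBall_self hr0.le⟩ hwcont.continuousOn
    by_cases hdist : dist z x₀ < r
    · -- interior maximum: contradiction with the equation
      exfalso
      have hzΩ : z ∈ Ω := hball₁ (by rwa [mem_ball])
      have hlocmax : IsLocalMax w z :=
        hzmax.isLocalMax (Filter.mem_of_superset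
          ((isOpen_ball).mem_nhds (by rwa [mem_ball])) ball_subset_closedBall)
      -- quadratic form bound at z
      have hqf : ∀ e : EuclideanSpace ℝ (Fin n), fderiv ℝ (fderiv ℝ u) z e e ≤ c * ‖e‖^2 := by
        intro e
        set A : ℝ := ‖z - x₀‖^2 with hA
        set B : ℝ := ⟪z - x₀, e⟫ with hB
        have hiden : ∀ t : ℝ, ‖z + t • e - x₀‖^2 = A + 2*t*B + t^2*‖e‖^2 := by
          intro t
          have h5 : z + t • e - x₀ = (z - x₀) + t • e := by abel
          rw [h5, norm_add_sq_real, real_inner_smul_right, norm_smul]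
          simp only [Real.norm_eq_abs, mul_pow, sq_abs]
          ring
        set g : ℝ → ℝ := fun t => w (z + t • e) with hgdef
        set g' : ℝ → ℝ := fun t => fderiv ℝ u (z + t • e) e - (c*B + c*t*‖e‖^2) with hg'def
        set g'' : ℝ → ℝ := fun t =>
          fderiv ℝ (fderiv ℝ u) (z + t • e) e e - c*‖e‖^2 with hg''def
        have h1 : ∀ t, HasDerivAt g (g' t) t := by
          intro t
          have hq : HasDerivAt (fun s : ℝ => (c/2 * (‖z + s • e - x₀‖^2 - r^2) + 1))
              (c*B + c*t*‖e‖^2) t := by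
            have hfun : (fun s : ℝ => (c/2 * (‖z + s • e - x₀‖^2 - r^2) + 1))
                = fun s : ℝ => (c/2 * ((A + 2*s*B + s^2*‖e‖^2) - r^2) + 1) := by
              funext s; rw [hiden s]
            rw [hfun]
            have hp2 : HasDerivAt (fun s : ℝ => 2*s*B) (2*B) t := by
              simpa using ((hasDerivAt_id t).const_mul 2).mul_const B
            have hp3 : HasDerivAt (fun s : ℝ => s^2*‖e‖^2) (2*t*‖e‖^2) t := by
              have := (hasDerivAt_pow 2 t).mul_const (‖e‖^2)
              simpa using this
            have hsum : HasDerivAt (fun s : ℝ => A + 2*s*B + s^2*‖e‖^2)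
                (2*B + 2*t*‖e‖^2) t := by
              exact ((hp2.const_add A).add hp3)
            have := ((hsum.sub_const (r^2)).const_mul (c/2)).add_const 1
            exact this.congr_deriv (by ring)
          have := (hd1 z e t).sub hq
          exact this
        have h2 : ∀ t, HasDerivAt g' (g'' t) t := by
          intro t
          have hq : HasDerivAt (fun s : ℝ => c*B + c*s*‖e‖^2) (c*‖e‖^2) t := by
            have : HasDerivAt (fun s : ℝ => c*s*‖e‖^2) (c*‖e‖^2) t := by
              simpa using (((hasDerivAt_id t).const_mul c).mul_const (‖e‖^2))
            simpa using this.const_add (c*B)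
          exact (hd2 z e t).sub hq
        have hgcont : Continuous g'' := (hcont2 z e).sub continuous_const
        have hlm : IsLocalMax g 0 := by
          have hc : ContinuousAt (fun t : ℝ => z + t • e) 0 :=
            (continuous_const.add (continuous_id.smul continuous_const)).continuousAt
          have htd : Tendsto (fun t : ℝ => z + t • e) (nhds 0) (nhds z) := by
            have h5 := hc.tendsto
            simpa using h5
          have h9 := htd.eventually hlocmax
          simp only [IsLocalMax, IsMaxFilter, hgdef]
          have hz0 : z + (0:ℝ) • e = z := by simp
          simpa [hz0] using h9
        have := snd_deriv_nonpos_of_localMax' h1 h2 hgcont hlm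
        have h6 : g'' 0 = fderiv ℝ (fderiv ℝ u) z e e - c*‖e‖^2 := by
          simp [hg''def]
        rw [h6] at this
        linarith
      -- assemble matrix inequality
      have hsymm := (hu.contDiffAt (x := z)).isSymmSndFDerivAt (by rw [minSmoothness_of_isRCLikeNormedField]; exact (WithTop.coe_le_coe (a := ⊤) (b := (2:ℕ∞))).2 le_top)
      have hsmat : Smat k (hess u z) ≤ (n.choose k : ℝ) * c^k := by
        have hbound : ∀ s ∈ Finset.univ.powersetCard k,
            ((hess u z).submatrix (Subtype.val : s → Fin n) Subtype.val).det ≤ c^k := by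
          intro s hs
          have hcard : Fintype.card s = k := by
            rw [Fintype.card_coe]
            exact (Finset.mem_powersetCard.1 hs).2
          set N := (hess u z).submatrix (Subtype.val : s → Fin n) Subtype.val with hNdef
          have hNentry : ∀ i j : s, N i j =
              fderiv ℝ (fderiv ℝ u) z (EuclideanSpace.single (i:Fin n) 1)
                (EuclideanSpace.single (j:Fin n) 1) := by
            intro i j
            simp only [hNdef, Matrix.submatrix_apply, hess, iteratedFDeriv_two_apply]
            rfl
          -- expansion of quadratic form
          have hexp : ∀ x : s → ℝ, dotProduct x (N.mulVec x) =
              fderiv ℝ (fderiv ℝ u) z (∑ i : s, x i • EuclideanSpace.single (i:Fin n) (1:ℝ))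
                (∑ i : s, x i • EuclideanSpace.single (i:Fin n) (1:ℝ)) := by
            intro x
            have hdot2 : dotProduct x (N.mulVec x) = ∑ i : s, ∑ j : s, x i * x j *
                (fderiv ℝ (fderiv ℝ u) z (EuclideanSpace.single (i:Fin n) (1:ℝ))
                  (EuclideanSpace.single (j:Fin n) (1:ℝ))) := by
              simp only [dotProduct, Matrix.mulVec, hNentry, Finset.mul_sum]
              exact Finset.sum_congr rfl fun i _ => Finset.sum_congr rfl fun j _ => by ring
            rw [hdot2]
            simp only [map_sum, _root_.map_smul, ContinuousLinearMap.sum_apply,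
              ContinuousLinearMap.smul_apply, smul_eq_mul, Finset.mul_sum]
            exact Finset.sum_congr rfl fun i _ => Finset.sum_congr rfl fun j _ => by
              rw [hsymm.eq (EuclideanSpace.single (i:Fin n) (1:ℝ))
                (EuclideanSpace.single (j:Fin n) (1:ℝ))]
              ring
          have hnorm : ∀ x : s → ℝ,
              ‖∑ i : s, x i • EuclideanSpace.single (i:Fin n) (1:ℝ)‖^2 =
                dotProduct x x := by
            intro x
            have hortho : Orthonormal ℝ (fun i : s => EuclideanSpace.single (i:Fin n) (1:ℝ)) :=
              (EuclideanSpace.orthonormal_single (𝕜 := ℝ) (ι := Fin n)).comp _ Subtype.val_injective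
            have := hortho.inner_sum x x Finset.univ
            rw [← real_inner_self_eq_norm_sq]
            rw [this]
            simp [dotProduct]
          have hpos : N.PosSemidef := by
            refine Matrix.PosSemidef.of_dotProduct_mulVec_nonneg ?_ ?_
            · -- Hermitian
              ext i j
              simp only [Matrix.conjTranspose_apply, star_trivial]
              rw [hNentry i j, hNentry j i]
              exact hsymm.eq _ _
            · intro x
              rw [star_trivial, hexp x]
              exact hpsd z hzΩ _
          have hbd2 : ∀ x : s → ℝ, dotProduct x (N.mulVec x) ≤
              c * dotProduct x x := by
            intro x
            rw [hexp x, ← hnorm x]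
            exact hqf _
          have := det_le_pow_of_quadform hpos hbd2
          rwa [hcard] at this
        calc Smat k (hess u z) ≤ ∑ s ∈ Finset.univ.powersetCard k, c^k :=
              Finset.sum_le_sum hbound
          _ = (n.choose k : ℝ) * c^k := by
            rw [Finset.sum_const, Finset.card_powersetCard, Finset.card_univ, Fintype.card_fin,
              nsmul_eq_mul]
      have hca : (n.choose k : ℝ) * c^k < 1 := by
        have hak : (n.choose k : ℝ) * a^k = 1 := by
          rw [hadef, ← Real.rpow_natCast ((n.choose k : ℝ) ^ (-(1:ℝ)/k)) k,
            ← Real.rpow_mul hchoose.le]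
          have hkne : (k:ℝ) ≠ 0 := by positivity
          rw [div_mul_cancel₀ _ hkne]
          rw [Real.rpow_neg_one]
          field_simp
        have hck : c^k < a^k := by
          apply pow_lt_pow_left₀ _ hc0.le (by omega)
          simp only [hcdef]; linarith
        calc (n.choose k : ℝ) * c^k < (n.choose k : ℝ) * a^k := by
              apply mul_lt_mul_of_pos_left hck hchoose
          _ = 1 := hak
      rw [heq z hzΩ] at hsmat
      linarith
    · -- boundary maximum
      have hdr : dist z x₀ = r := le_antisymm (mem_closedBall.1 hzK) (not_lt.1 hdist)
      have hwz : w z ≤ 0 := by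
        have hz1 : u z ≤ 1 := hle1 z (hsub hzK)
        have : ‖z - x₀‖ = r := by rwa [← dist_eq_norm]
        simp only [hwdef, this]
        ring_nf
        linarith
      have := hzmax (mem_closedBall_self hr0.le)
      have hwx₀ : w x₀ ≤ 0 := le_trans this hwz
      simp only [hwdef, sub_self, norm_zero] at hwx₀
      have : u x₀ - (c/2 * (0 - r^2) + 1) ≤ 0 := by
        convert hwx₀ using 2
        norm_num
      linarith [this]
  -- from the key estimate: a * r^2 / 2 ≤ 1
  have hux₀ : 0 ≤ u x₀ := by
    have hx₀Ω : x₀ ∈ Ω := hball₁ (mem_ball_self hr0)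
    have hx₀c : x₀ ∈ closure Ω := subset_closure hx₀Ω
    have h0c : (0:EuclideanSpace ℝ (Fin n)) ∈ closure Ω := subset_closure h0Ω
    set g : ℝ → ℝ := fun t => u (t • x₀) with hgdef
    have hgconv : ConvexOn ℝ (Icc (0:ℝ) 1) g := by
      have haff : ConvexOn ℝ ((AffineMap.lineMap (0:EuclideanSpace ℝ (Fin n)) x₀ : ℝ →ᵃ[ℝ] EuclideanSpace ℝ (Fin n)) ⁻¹' (closure Ω))
          (u ∘ (AffineMap.lineMap (0:EuclideanSpace ℝ (Fin n)) x₀ : ℝ →ᵃ[ℝ] EuclideanSpace ℝ (Fin n))) := hconv.comp_affineMap _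
      have hsubset : Icc (0:ℝ) 1 ⊆ (AffineMap.lineMap (0:EuclideanSpace ℝ (Fin n)) x₀ : ℝ →ᵃ[ℝ] EuclideanSpace ℝ (Fin n)) ⁻¹' (closure Ω) := by
        intro t ht
        simp only [mem_preimage, AffineMap.lineMap_apply, vsub_eq_sub, sub_zero, vadd_eq_add,
          add_zero]
        exact (hΩc.closure).smul_mem_of_zero_mem h0c hx₀c ht
      have := haff.subset hsubset (convex_Icc _ _)
      convert this using 1
      funext t
      simp [hgdef, AffineMap.lineMap_apply]
    have hgd : HasDerivAt g 0 0 := by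
      have hfd : fderiv ℝ u 0 = 0 := by
        have h9 : gradient u 0 = (InnerProductSpace.toDual ℝ
            (EuclideanSpace ℝ (Fin n))).symm (fderiv ℝ u 0) := rfl
        rw [h9] at hg
        have h10 := congrArg (InnerProductSpace.toDual ℝ (EuclideanSpace ℝ (Fin n))) hg
        rwa [LinearIsometryEquiv.apply_symm_apply, map_zero] at h10
      have h11 := hd1 0 x₀ 0
      simp only [zero_smul, add_zero, zero_add, hfd] at h11
      simpa [hgdef] using h11

    have hslope := hgconv.le_slope_of_hasDerivWithinAt_Ioi
      (by constructor <;> norm_num : (0:ℝ) ∈ Icc (0:ℝ) 1)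
      (by constructor <;> norm_num : (1:ℝ) ∈ Icc (0:ℝ) 1) one_pos
      (hgd.hasDerivWithinAt)
    rw [slope_def_field] at hslope
    have hg0 : g 0 = 0 := by simp [hgdef, h0]
    have hg1 : g 1 = u x₀ := by simp [hgdef]
    rw [hg0, hg1] at hslope
    simpa using hslope
  have har : a * r^2 ≤ 2 := by
    by_contra hcon
    push_neg at hcon
    have h2r : 0 < r^2 := by positivity
    set ε : ℝ := min (a/2) ((a - 2/r^2)/2) with hεdef
    have haux : 2/r^2 < a := by
      rw [div_lt_iff₀ h2r]; linarith
    have hε0 : 0 < ε := lt_min (by linarith) (by linarith)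
    have hεa : ε < a := lt_of_le_of_lt (min_le_left _ _) (by linarith)
    have := hkey ε hε0 hεa
    have hεbound : ε ≤ (a - 2/r^2)/2 := min_le_right _ _
    have hc2 : 2/r^2 < a - ε := by linarith
    have : (a - ε) * r^2 > 2 := by
      rw [div_lt_iff₀ h2r] at hc2
      linarith
    have hkey2 := hkey ε hε0 hεa
    nlinarith [hux₀]
  -- conclude
  have hrs : r ≤ Real.sqrt (2/a) := by
    rw [← Real.sqrt_sq hr0.le]
    apply Real.sqrt_le_sqrt
    rw [le_div_iff₀ ha0]
    linarith
  have hsimp : Real.sqrt (2 * n / ((n : ℝ) * a)) = Real.sqrt (2/a) := by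
    congr 1
    have hn0 : (n:ℝ) ≠ 0 := by positivity
    field_simp
  rw [hsimp]
  calc R = γ * r := by rw [hrdef]; field_simp
    _ ≤ γ * Real.sqrt (2/a) := by apply mul_le_mul_of_nonneg_left hrs hγ0.le
    _ = Real.sqrt (2/a) * γ := by ring

end
end

section
/- Let u be a C² convex function on a bounded convex domain Ω ⊂ ℝ^n with u(0)=0, Du(0)=0 in Ω and u = 1 on ∂Ω, and suppose Ω satisfies γ^{-1}B_R(x₀) ⊂ Ω ⊂ γB_R(x₀). Then R^{-n} ≤ ω_n^{-1} γ^n ∫_Ω det(D²u) dx, where ω_n is the volume of the unit ball. -/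
open MeasureTheory Filter Bornology Metric Set
open scoped RealInnerProductSpace ENNReal

noncomputable section

/-!
For `δ = (γR)² - ‖x₀‖²`, every `p` in the ball `B` of centre `-x₀/δ` and radius `δ^{-1/2}` satisfies
`⟪p, x⟫ < 1` on `closedBall x₀ (γR) ⊇ closure Ω`. Then `u - ⟪p, ·⟫` vanishes at `0` and is positive
on `∂Ω`, so it attains its minimum inside `Ω`, at a point where `∇u = p`; thus `B ⊆ ∇u(Ω)`.
The area formula bounds `|∇u(Ω)|` by `∫_Ω |det D²u|`, which is `∫_Ω det D²u` since `D²u ≥ 0` by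
convexity, while `|B| = ω_n δ^{-n/2} ≥ ω_n (γR)^{-n}`.
-/

open Matrix InnerProductSpace

theorem Matrix.posSemidef_toMatrix₂ {ι M : Type*} [Fintype ι] [DecidableEq ι] [AddCommGroup M]
    [Module ℝ M] (b : Module.Basis ι ℝ M) (B : M →ₗ[ℝ] M →ₗ[ℝ] ℝ) (hsymm : ∀ x y, B x y = B y x)
    (hnonneg : ∀ x, 0 ≤ B x x) : (LinearMap.toMatrix₂ b b B).PosSemidef := by
  refine .of_dotProduct_mulVec_nonneg (by ext i j; simp [LinearMap.toMatrix₂_apply, hsymm])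
    fun v => ?_
  simpa using (dotProduct_toMatrix₂_mulVec b b B v v).symm ▸ hnonneg _

theorem pow_finrank_mul_measure_unitBall_le_of_measure_ball_le {E : Type*} [NormedAddCommGroup E]
    [NormedSpace ℝ E] [FiniteDimensional ℝ E] [MeasurableSpace E] [BorelSpace E]
    (μ : Measure E) [μ.IsAddHaarMeasure] {c : E} {s I : ℝ} (hs : 0 < s)
    (h : μ (ball c s) ≤ ENNReal.ofReal I) :
    s ^ Module.finrank ℝ E * (μ (ball 0 1)).toReal ≤ I := by
  have hI : 0 ≤ I := by
    by_contra! hI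
    rw [ENNReal.ofReal_of_nonpos hI.le, nonpos_iff_eq_zero] at h
    exact (measure_ball_pos μ c hs).ne' h
  rw [Measure.addHaar_ball_of_pos μ c hs, ENNReal.le_ofReal_iff_toReal_le (by finiteness) hI,
    ENNReal.toReal_mul, ENNReal.toReal_ofReal (by positivity)] at h
  exact h

section InnerProductSpace

variable {E : Type*} [NormedAddCommGroup E] [InnerProductSpace ℝ E]

theorem inner_lt_one_of_mem_closedBall {w x p : E} {r : ℝ} (hw : ‖w‖ < r)
    (hx : x ∈ closedBall w r)
    (hp : p ∈ ball (-((r ^ 2 - ‖w‖ ^ 2)⁻¹ • w)) (√(r ^ 2 - ‖w‖ ^ 2))⁻¹) : ⟪p, x⟫ < 1 := by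
  set δ := r ^ 2 - ‖w‖ ^ 2
  have hδ : 0 < δ := by nlinarith [norm_nonneg w]
  rcases eq_or_ne x 0 with rfl | hx0
  · simp
  rw [mem_ball, dist_eq_norm, sub_neg_eq_add] at hp
  rw [mem_closedBall, dist_eq_norm] at hx
  have hCS : ⟪p + δ⁻¹ • w, x⟫ < (√δ)⁻¹ * ‖x‖ :=
    (real_inner_le_norm _ _).trans_lt (mul_lt_mul_of_pos_right hp (norm_pos_iff.2 hx0))
  have hwx : ‖x‖ ^ 2 - δ ≤ 2 * ⟪w, x⟫ := by
    have := norm_sub_sq_real x w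
    rw [real_inner_comm]
    nlinarith [norm_nonneg (x - w)]
  -- `t ≤ (t² + 1) / 2` for `t = ‖x‖ / √δ`
  have hAMGM : (√δ)⁻¹ * ‖x‖ ≤ (δ⁻¹ * ‖x‖ ^ 2 + 1) / 2 := by
    have h := sq_nonneg ((√δ)⁻¹ * ‖x‖ - 1)
    rw [show ((√δ)⁻¹ * ‖x‖ - 1) ^ 2 = δ⁻¹ * ‖x‖ ^ 2 - 2 * ((√δ)⁻¹ * ‖x‖) + 1 by
      rw [sub_sq, mul_pow, inv_pow, Real.sq_sqrt hδ.le]; ring] at h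
    linarith
  rw [inner_add_left, real_inner_smul_left] at hCS
  have hwx' := mul_le_mul_of_nonneg_left hwx (inv_pos.2 hδ).le
  rw [mul_sub, inv_mul_cancel₀ hδ.ne'] at hwx'
  linarith

theorem mem_image_gradient_of_inner_lt_one [ProperSpace E] {Ω : Set E} {u : E → ℝ} {p : E}
    (hΩo : IsOpen Ω) (hΩb : IsBounded Ω) (h0Ω : 0 ∈ Ω) (hcont : ContinuousOn u (closure Ω))
    (hdiff : DifferentiableOn ℝ u Ω) (h0 : u 0 = 0) (hbd : ∀ x ∈ frontier Ω, 1 ≤ u x)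
    (hp : ∀ x ∈ closure Ω, ⟪p, x⟫ < 1) : p ∈ gradient u '' Ω := by
  set v : E → ℝ := fun x => u x - toDual ℝ E p x
  obtain ⟨z, hz, hmin⟩ : ∃ z ∈ closure Ω, IsMinOn v (closure Ω) z :=
    hΩb.isCompact_closure.exists_isMinOn ⟨0, subset_closure h0Ω⟩
      (hcont.sub (toDual ℝ E p).continuous.continuousOn)
  -- `v ≥ 1 - ⟪p, z⟫ > 0 = v 0` on the boundary, so `v` attains its minimum inside `Ω`
  have hzΩ : z ∈ Ω := by
    by_contra hzΩ
    have hvz : v z ≤ v 0 := hmin (subset_closure h0Ω)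
    simp only [v, toDual_apply_apply, h0, inner_zero_right] at hvz
    linarith [hbd z (by rw [hΩo.frontier_eq]; exact ⟨hz, hzΩ⟩), hp z hz]
  have hloc : IsLocalMin v z :=
    hmin.isLocalMin (mem_of_superset (hΩo.mem_nhds hzΩ) subset_closure)
  have hfd : fderiv ℝ u z = toDual ℝ E p := by
    have hv := ((hdiff z hzΩ).differentiableAt (hΩo.mem_nhds hzΩ)).hasFDerivAt.sub
      (toDual ℝ E p).hasFDerivAt
    exact sub_eq_zero.1 (hloc.hasFDerivAt_eq_zero hv)
  exact ⟨z, hzΩ, by rw [gradient, hfd, LinearIsometryEquiv.symm_apply_apply]⟩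

theorem ConvexOn.fderiv_fderiv_apply_self_nonneg {s : Set E} {u : E → ℝ} {x : E}
    (hconv : ConvexOn ℝ s u) (hx : x ∈ interior s)
    (hd : ∀ y ∈ interior s, DifferentiableAt ℝ u y) (hd2 : DifferentiableAt ℝ (fderiv ℝ u) x)
    (ξ : E) : 0 ≤ fderiv ℝ (fderiv ℝ u) x ξ ξ := by
  set L : ℝ →ᵃ[ℝ] E := AffineMap.lineMap x (x + ξ)
  have hL : ∀ t, HasDerivAt L ξ t := fun t => by
    simpa using AffineMap.hasDerivAt_lineMap (a := x) (b := x + ξ) (x := t)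
  have hL0 : L 0 = x := AffineMap.lineMap_apply_zero _ _
  set S := L ⁻¹' interior s
  have hS : IsOpen S := isOpen_interior.preimage AffineMap.lineMap_continuous
  have hgS : ∀ t ∈ S, HasDerivAt (u ∘ L) (fderiv ℝ u (L t) ξ) t := fun t ht =>
    (hd _ ht).hasFDerivAt.comp_hasDerivAt t (hL t)
  have hmono : MonotoneOn (deriv (u ∘ L)) S :=
    ((hconv.subset interior_subset hconv.1.interior).comp_affineMap L).monotoneOn_deriv
      fun t ht => (hgS t ht).differentiableAt
  have hD : HasDerivAt (fun t => fderiv ℝ u (L t) ξ) (fderiv ℝ (fderiv ℝ u) x ξ ξ) 0 := by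
    rw [← hL0] at hd2 ⊢
    simpa using (hd2.hasFDerivAt.comp_hasDerivAt 0 (hL 0)).clm_apply (hasDerivAt_const 0 ξ)
  have h0S : (0 : ℝ) ∈ S := by simpa [S, hL0] using hx
  have hD' : HasDerivWithinAt (deriv (u ∘ L)) (fderiv ℝ (fderiv ℝ u) x ξ ξ) S 0 :=
    hD.hasDerivWithinAt.congr (fun t ht => (hgS t ht).deriv) (hgS 0 h0S).deriv
  exact hD'.nonneg_of_monotoneOn (hS.preperfect 0 h0S) hmono


variable (E) in
/-- `(toDual ℝ E).symm` as a linear map: `toDual` is only conjugate-linear in general, and over `ℝ`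
the cast is definitional. -/
def fromDualCLM [CompleteSpace E] : StrongDual ℝ E →L[ℝ] E :=
  ((toDual ℝ E).symm.toContinuousLinearEquiv : StrongDual ℝ E ≃L[ℝ] E).toContinuousLinearMap

theorem hasFDerivAt_gradient [CompleteSpace E] {u : E → ℝ} {B : E →L[ℝ] StrongDual ℝ E} {x : E}
    (h : HasFDerivAt (fderiv ℝ u) B x) : HasFDerivAt (gradient u) (fromDualCLM E ∘L B) x :=
  (fromDualCLM E).hasFDerivAt.comp x h

theorem det_fromDualCLM_comp [FiniteDimensional ℝ E] {ι : Type*} [Fintype ι] [DecidableEq ι]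
    (b : OrthonormalBasis ι ℝ E) (B : E →L[ℝ] StrongDual ℝ E) :
    (fromDualCLM E ∘L B).det = (LinearMap.toMatrix₂ b.toBasis b.toBasis B.toLinearMap₁₂).det := by
  rw [ContinuousLinearMap.det, ← LinearMap.det_toMatrix b.toBasis, ← det_transpose]
  congr 1
  ext i j
  simp only [transpose_apply, LinearMap.toMatrix_apply, LinearMap.toMatrix₂_apply,
    OrthonormalBasis.coe_toBasis, OrthonormalBasis.coe_toBasis_repr_apply,
    OrthonormalBasis.repr_apply_apply]
  rw [real_inner_comm]
  exact toDual_symm_apply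

end InnerProductSpace

section Hessian

variable {n : ℕ} {u : EuclideanSpace ℝ (Fin n) → ℝ}

theorem hess_eq_toMatrix₂ (x : EuclideanSpace ℝ (Fin n)) :
    hess u x = LinearMap.toMatrix₂ (EuclideanSpace.basisFun (Fin n) ℝ).toBasis
      (EuclideanSpace.basisFun (Fin n) ℝ).toBasis (fderiv ℝ (fderiv ℝ u) x).toLinearMap₁₂ := by
  ext i j
  simp [hess, iteratedFDeriv_two_apply, LinearMap.toMatrix₂_apply]

theorem continuous_det_hess (hu : ContDiff ℝ 2 u) : Continuous fun x => (hess u x).det := by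
  refine Continuous.matrix_det (continuous_matrix fun i j => ?_)
  exact (continuous_eval_const _).comp (hu.continuous_iteratedFDeriv le_rfl)

theorem hess_posSemidef {s : Set (EuclideanSpace ℝ (Fin n))} {x : EuclideanSpace ℝ (Fin n)}
    (hu : ContDiff ℝ 2 u) (hconv : ConvexOn ℝ s u) (hx : x ∈ interior s) :
    (hess u x).PosSemidef := by
  rw [hess_eq_toMatrix₂]
  refine posSemidef_toMatrix₂ _ _ (fun v w => ?_) fun v => ?_
  · exact hu.contDiffAt.isSymmSndFDerivAt (by simp) v w
  · exact hconv.fderiv_fderiv_apply_self_nonneg hx (fun y _ => hu.differentiable two_ne_zero y)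
      ((hu.fderiv_right one_add_one_eq_two.le).differentiable one_ne_zero x) v

theorem volume_image_gradient_le_ofReal_integral_det_hess {Ω : Set (EuclideanSpace ℝ (Fin n))}
    (hΩo : IsOpen Ω) (hΩb : IsBounded Ω) (hu : ContDiff ℝ 2 u) (hconv : ConvexOn ℝ Ω u) :
    volume (gradient u '' Ω) ≤ ENNReal.ofReal (∫ x in Ω, (hess u x).det) := by
  have hdet_nonneg : ∀ x ∈ Ω, 0 ≤ (hess u x).det := fun x hx =>
    (hess_posSemidef hu hconv (hΩo.interior_eq.symm ▸ hx)).det_nonneg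
  have hD2 : ∀ x, HasFDerivAt (fderiv ℝ u) (fderiv ℝ (fderiv ℝ u) x) x := fun x =>
    ((hu.fderiv_right one_add_one_eq_two.le).differentiable one_ne_zero x).hasFDerivAt
  calc volume (gradient u '' Ω)
      ≤ ∫⁻ x in Ω, ENNReal.ofReal |(fromDualCLM _ ∘L fderiv ℝ (fderiv ℝ u) x).det| :=
        addHaar_image_le_lintegral_abs_det_fderiv volume hΩo.measurableSet
          fun x _ => (hasFDerivAt_gradient (hD2 x)).hasFDerivWithinAt
    _ = ∫⁻ x in Ω, ENNReal.ofReal (hess u x).det := by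
        refine setLIntegral_congr_fun hΩo.measurableSet fun x hx => ?_
        rw [det_fromDualCLM_comp (EuclideanSpace.basisFun (Fin n) ℝ), ← hess_eq_toMatrix₂,
          abs_of_nonneg (hdet_nonneg x hx)]
    _ = ENNReal.ofReal (∫ x in Ω, (hess u x).det) := by
        refine (ofReal_integral_eq_lintegral_ofReal ?_ ?_).symm
        · exact (continuous_det_hess hu).continuousOn.integrableOn_compact
            hΩb.isCompact_closure |>.mono_set subset_closure
        · exact (ae_restrict_iff' hΩo.measurableSet).2 (ae_of_all _ hdet_nonneg)

end Hessian

theorem radius_lower_bound_by_hessian_integral_general (n : ℕ)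
    (Ω : Set (EuclideanSpace ℝ (Fin n))) (hΩo : IsOpen Ω) (hΩc : Convex ℝ Ω)
    (hΩb : IsBounded Ω) (h0Ω : (0 : EuclideanSpace ℝ (Fin n)) ∈ Ω)
    (u : EuclideanSpace ℝ (Fin n) → ℝ) (hu : ContDiff ℝ 2 u)
    (hconv : ConvexOn ℝ (closure Ω) u)
    (h0 : u 0 = 0)
    (hbd : ∀ x ∈ frontier Ω, u x = 1)
    (γ R : ℝ) (x₀ : EuclideanSpace ℝ (Fin n)) (hR : 0 < R)
    (hball₂ : Ω ⊆ Metric.ball x₀ (γ * R)) :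
    R ^ (-(n : ℝ)) ≤
      ((volume (Metric.ball (0 : EuclideanSpace ℝ (Fin n)) 1)).toReal)⁻¹ * γ ^ n *
        ∫ x in Ω, (hess u x).det := by
  have hx₀ : ‖x₀‖ < γ * R := by simpa using hball₂ h0Ω
  have hγ : 0 < γ := pos_of_mul_pos_left ((norm_nonneg x₀).trans_lt hx₀) hR.le
  set δ := (γ * R) ^ 2 - ‖x₀‖ ^ 2
  have hδ : 0 < δ := by nlinarith [norm_nonneg x₀]
  have hsub : ball (-(δ⁻¹ • x₀)) (√δ)⁻¹ ⊆ gradient u '' Ω := fun p hp =>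
    mem_image_gradient_of_inner_lt_one hΩo hΩb h0Ω hu.continuous.continuousOn
      (hu.differentiable two_ne_zero).differentiableOn h0 (fun x hx => (hbd x hx).ge)
      fun x hx => inner_lt_one_of_mem_closedBall hx₀
        (closure_ball_subset_closedBall (closure_mono hball₂ hx)) hp
  have hvol := pow_finrank_mul_measure_unitBall_le_of_measure_ball_le volume (by positivity)
    ((measure_mono hsub).trans (volume_image_gradient_le_ofReal_integral_det_hess hΩo hΩb hu
      (hconv.subset subset_closure hΩc)))
  rw [finrank_euclideanSpace_fin] at hvol
  set ω := (volume (ball (0 : EuclideanSpace ℝ (Fin n)) 1)).toReal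
  have hω : 0 < ω := ENNReal.toReal_pos (measure_ball_pos _ _ one_pos).ne' measure_ball_lt_top.ne
  have hs : (γ * R)⁻¹ ≤ (√δ)⁻¹ :=
    inv_anti₀ (by positivity) ((Real.sqrt_le_left (by positivity)).2 (sub_le_self _ (sq_nonneg _)))
  calc R ^ (-(n : ℝ)) = ω⁻¹ * γ ^ n * ((γ * R)⁻¹ ^ n * ω) := by
        rw [Real.rpow_neg hR.le, Real.rpow_natCast, inv_pow, mul_pow]
        field_simp
    _ ≤ ω⁻¹ * γ ^ n * ((√δ)⁻¹ ^ n * ω) := by gcongr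
    _ ≤ ω⁻¹ * γ ^ n * ∫ x in Ω, (hess u x).det := by gcongr

theorem radius_lower_bound_by_hessian_integral (n : ℕ) (hn : 0 < n)
    (Ω : Set (EuclideanSpace ℝ (Fin n))) (hΩo : IsOpen Ω) (hΩc : Convex ℝ Ω)
    (hΩb : IsBounded Ω) (h0Ω : (0 : EuclideanSpace ℝ (Fin n)) ∈ Ω)
    (u : EuclideanSpace ℝ (Fin n) → ℝ) (hu : ContDiff ℝ 2 u)
    (hconv : ConvexOn ℝ (closure Ω) u)
    (h0 : u 0 = 0) (hg : gradient u 0 = 0)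
    (hbd : ∀ x ∈ frontier Ω, u x = 1)
    (γ R : ℝ) (x₀ : EuclideanSpace ℝ (Fin n)) (hγ : 1 ≤ γ) (hR : 0 < R)
    (hball₁ : Metric.ball x₀ (γ⁻¹ * R) ⊆ Ω) (hball₂ : Ω ⊆ Metric.ball x₀ (γ * R)) :
    R ^ (-(n : ℝ)) ≤
      ((volume (Metric.ball (0 : EuclideanSpace ℝ (Fin n)) 1)).toReal)⁻¹ * γ ^ n *
        ∫ x in Ω, (hess u x).det :=
  radius_lower_bound_by_hessian_integral_general n Ω hΩo hΩc hΩb h0Ω u hu hconv h0 hbd γ R x₀ hR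
    hball₂

end
end

section
/- Let u be a convex function on ℝ^n with u(0)=0, Du(0)=0, Ω_t = {u < t}, and let C₁, C₂ ≥ 1 be constants. Then ∫_{Ω_{t/C₂}} |t/C₂ − u(x)|^{n/(n-1)} dx ≥ C₃^{-1} ∫_{Ω_{tC₁}} |tC₁ − u(x)|^{n/(n-1)} dx for a constant C₃ depending only on n, C₁, C₂, for all t > 0. -/
/-!
Write `F(s) = ∫_{u < s} |s - u|^p`, `D = C₁C₂` and `s = t/C₂`, so that `tC₁ = Ds`. On `{u < Ds}`
one has `Ds - u ≤ D(s - u)` where `u ≤ 0` and `Ds - u ≤ Ds` where `u > 0`, hence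
`F(Ds) ≤ D^p F(s) + (Ds)^p |{u < Ds}|`. Convexity and `u(0) = 0` give `(2D)⁻¹{u < Ds} ⊆ {u < s/2}`,
so `|{u < Ds}| ≤ (2D)^n |{u < s/2}|`, and on `{u < s/2}` the integrand of `F(s)` is at least
`(s/2)^p`.
-/

open MeasureTheory Set Bornology Pointwise Module

theorem ConvexOn.smul_sublevel_subset {E : Type*} [AddCommGroup E] [Module ℝ E] {u : E → ℝ}
    (hu : ConvexOn ℝ univ u) (h0 : u 0 = 0) {l : ℝ} (hl₀ : 0 < l) (hl₁ : l ≤ 1) (a : ℝ) :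
    l • {x | u x < a} ⊆ {x | u x < l * a} := by
  rintro _ ⟨y, hy, rfl⟩
  have hseg := hu.2 (mem_univ y) (mem_univ 0) hl₀.le (sub_nonneg.2 hl₁) (add_sub_cancel l 1)
  simp only [smul_zero, add_zero, h0, mul_zero, smul_eq_mul] at hseg
  exact hseg.trans_lt (mul_lt_mul_of_pos_left hy hl₀)

theorem abs_mul_sub_rpow_le {D s v p : ℝ} (hD : 1 ≤ D) (hs : 0 < s) (hv : v < D * s)
    (hp : 0 ≤ p) :
    |D * s - v| ^ p ≤ (if v < s then D ^ p * |s - v| ^ p else 0) + (D * s) ^ p := by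
  rcases le_or_gt v 0 with hv₀ | hv₀
  · have hcone : |D * s - v| ≤ D * |s - v| := by
      rw [abs_of_pos (by linarith), abs_of_pos (by linarith)]
      nlinarith
    rw [if_pos (by linarith), ← Real.mul_rpow (by linarith) (abs_nonneg _)]
    have := Real.rpow_nonneg (by positivity : 0 ≤ D * s) p
    linarith [Real.rpow_le_rpow (abs_nonneg _) hcone hp]
  · have hfirst : 0 ≤ (if v < s then D ^ p * |s - v| ^ p else 0) := by
      split_ifs <;> positivity
    have : |D * s - v| ≤ D * s := by rw [abs_of_pos (by linarith)]; linarith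
    linarith [Real.rpow_le_rpow (abs_nonneg _) this hp]

variable {E : Type*} [NormedAddCommGroup E] [NormedSpace ℝ E] [FiniteDimensional ℝ E]
  [MeasurableSpace E] [BorelSpace E] (μ : Measure E) [μ.IsAddHaarMeasure] {u : E → ℝ}

theorem ConvexOn.measureReal_sublevel_le (hu : ConvexOn ℝ univ u) (h0 : u 0 = 0) {a c : ℝ}
    (hc : 1 ≤ c) (hb : IsBounded {x | u x < a / c}) :
    μ.real {x | u x < a} ≤ c ^ finrank ℝ E * μ.real {x | u x < a / c} := by
  have hc₀ : 0 < c := one_pos.trans_le hc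
  have hsub := hu.smul_sublevel_subset h0 (inv_pos.2 hc₀) (inv_le_one_of_one_le₀ hc) a
  rw [inv_mul_eq_div] at hsub
  have hscaled := measureReal_mono (μ := μ) hsub hb.measure_lt_top.ne
  rw [measureReal_def, Measure.addHaar_smul_of_nonneg μ (inv_nonneg.2 hc₀.le),
    ENNReal.toReal_mul, ENNReal.toReal_ofReal (by positivity), ← measureReal_def,
    inv_pow] at hscaled
  rwa [inv_mul_le_iff₀ (by positivity)] at hscaled

noncomputable def sublevelIntegral (u : E → ℝ) (p s : ℝ) : ℝ :=
  ∫ x in {x | u x < s}, |s - u x| ^ p ∂μ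

variable {μ} {p s : ℝ}

theorem Continuous.integrableOn_abs_sub_rpow (hu : Continuous u) (hb : IsBounded {x | u x < s})
    (hp : 0 ≤ p) (a : ℝ) : IntegrableOn (fun x => |a - u x| ^ p) {x | u x < s} μ :=
  (((continuous_const.sub hu).abs.rpow_const fun _ => Or.inr hp).continuousOn.integrableOn_compact
    hb.isCompact_closure).mono_set subset_closure

theorem Continuous.rpow_mul_measureReal_le_sublevelIntegral (hu : Continuous u)
    (hb : IsBounded {x | u x < s}) (hp : 0 ≤ p) {r : ℝ} (hr : r ≤ s) :
    (s - r) ^ p * μ.real {x | u x < r} ≤ sublevelIntegral μ u p s := by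
  have hrs : {x | u x < r} ⊆ {x | u x < s} := fun x hx => lt_of_lt_of_le hx hr
  calc (s - r) ^ p * μ.real {x | u x < r}
      ≤ ∫ x in {x | u x < r}, |s - u x| ^ p ∂μ := by
        refine setIntegral_ge_of_const_le_real (isOpen_lt hu continuous_const).measurableSet
          ((hb.subset hrs).measure_lt_top (μ := μ)).ne (fun x hx => ?_)
          ((hu.integrableOn_abs_sub_rpow hb hp s).mono_set hrs)
        exact Real.rpow_le_rpow (sub_nonneg.2 hr)
          ((sub_le_sub_left (le_of_lt hx) s).trans (le_abs_self _)) hp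
    _ ≤ sublevelIntegral μ u p s :=
        setIntegral_mono_set (hu.integrableOn_abs_sub_rpow hb hp s)
          (Filter.Eventually.of_forall fun _ => by positivity) (Filter.Eventually.of_forall hrs)

theorem Continuous.sublevelIntegral_mul_le (hu : Continuous u) {D : ℝ} (hD : 1 ≤ D) (hs : 0 < s)
    (hb : IsBounded {x | u x < D * s}) (hp : 0 ≤ p) :
    sublevelIntegral μ u p (D * s) ≤
      D ^ p * sublevelIntegral μ u p s + (D * s) ^ p * μ.real {x | u x < D * s} := by
  have hmeas : ∀ a, MeasurableSet {x | u x < a} :=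
    fun a => (isOpen_lt hu continuous_const).measurableSet
  have hfin : μ {x | u x < D * s} ≠ ⊤ := hb.measure_lt_top.ne
  have hsub : {x | u x < s} ⊆ {x | u x < D * s} :=
    fun x hx => lt_of_lt_of_le hx (le_mul_of_one_le_left hs.le hD)
  have hind : IntegrableOn ({x | u x < s}.indicator fun x => D ^ p * |s - u x| ^ p)
      {x | u x < D * s} μ :=
    ((hu.integrableOn_abs_sub_rpow hb hp s).const_mul _).indicator (hmeas s)
  calc sublevelIntegral μ u p (D * s)
      ≤ ∫ x in {x | u x < D * s},
          ({x | u x < s}.indicator (fun x => D ^ p * |s - u x| ^ p) x + (D * s) ^ p) ∂μ := by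
        refine setIntegral_mono_on (hu.integrableOn_abs_sub_rpow hb hp _)
          (hind.add (integrableOn_const hfin)) (hmeas _) fun x hx => ?_
        simpa only [indicator_apply, mem_ofPred_eq] using abs_mul_sub_rpow_le hD hs hx hp
    _ = D ^ p * sublevelIntegral μ u p s + (D * s) ^ p * μ.real {x | u x < D * s} := by
        rw [integral_add hind (integrableOn_const hfin), setIntegral_indicator (hmeas s),
          inter_eq_right.2 hsub, integral_const_mul, setIntegral_const, smul_eq_mul,
          sublevelIntegral]
        ring

theorem ConvexOn.sublevelIntegral_mul_le (hu : ConvexOn ℝ univ u) (h0 : u 0 = 0) {D : ℝ}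
    (hD : 1 ≤ D) (hs : 0 < s) (hb : IsBounded {x | u x < D * s}) (hp : 0 ≤ p) :
    sublevelIntegral μ u p (D * s) ≤
      (D ^ p + (2 * D) ^ p * (2 * D) ^ finrank ℝ E) * sublevelIntegral μ u p s := by
  have hcont : Continuous u := continuousOn_univ.1 (hu.continuousOn isOpen_univ)
  have hD₀ : 0 < D := one_pos.trans_le hD
  have hbs : IsBounded {x | u x < s} :=
    hb.subset fun x hx => lt_of_lt_of_le hx (le_mul_of_one_le_left hs.le hD)
  have hhalf : D * s / (2 * D) = s / 2 := by field_simp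
  have hvol : μ.real {x | u x < D * s} ≤ (2 * D) ^ finrank ℝ E * μ.real {x | u x < s / 2} := by
    rw [← hhalf]
    refine hu.measureReal_sublevel_le μ h0 (by linarith) ?_
    rw [hhalf]
    exact hbs.subset fun x hx => lt_of_lt_of_le hx (half_le_self hs.le)
  have hlow := hcont.rpow_mul_measureReal_le_sublevelIntegral (μ := μ) hbs hp (half_le_self hs.le)
  rw [sub_half] at hlow
  have hrad : (D * s) ^ p = (2 * D) ^ p * (s / 2) ^ p := by
    rw [← Real.mul_rpow (by positivity) (by positivity)]; ring_nf
  calc sublevelIntegral μ u p (D * s)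
      ≤ D ^ p * sublevelIntegral μ u p s + (D * s) ^ p * μ.real {x | u x < D * s} :=
        hcont.sublevelIntegral_mul_le hD hs hb hp
    _ ≤ D ^ p * sublevelIntegral μ u p s +
          (2 * D) ^ p * (s / 2) ^ p * ((2 * D) ^ finrank ℝ E * μ.real {x | u x < s / 2}) := by
        rw [hrad]; gcongr
    _ = D ^ p * sublevelIntegral μ u p s +
          (2 * D) ^ p * (2 * D) ^ finrank ℝ E * ((s / 2) ^ p * μ.real {x | u x < s / 2}) := by
        ring
    _ ≤ D ^ p * sublevelIntegral μ u p s +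
          (2 * D) ^ p * (2 * D) ^ finrank ℝ E * sublevelIntegral μ u p s := by
        gcongr
    _ = _ := by ring

theorem sublevel_integral_comparison_general (n : ℕ)
    (C₁ C₂ : ℝ) (h1 : 1 ≤ C₁) (h2 : 1 ≤ C₂) :
    ∃ C₃ > (0:ℝ), ∀ u : EuclideanSpace ℝ (Fin n) → ℝ,
      ConvexOn ℝ Set.univ u → u 0 = 0 → gradient u 0 = 0 →
      (∀ t : ℝ, IsBounded {x | u x < t}) →
      ∀ t : ℝ, 0 < t →
        C₃⁻¹ * ∫ x in {x | u x < t * C₁}, |t * C₁ - u x| ^ ((n : ℝ) / (n - 1)) ≤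
          ∫ x in {x | u x < t / C₂}, |t / C₂ - u x| ^ ((n : ℝ) / (n - 1)) := by
  set D := C₁ * C₂
  set p : ℝ := (n : ℝ) / (n - 1)
  have hD : 1 ≤ D := one_le_mul_of_one_le_of_one_le h1 h2
  have hD₀ : 0 < D := one_pos.trans_le hD
  have hp : 0 ≤ p := by
    rcases n with _ | n
    · simp [p]
    · exact div_nonneg (Nat.cast_nonneg _) (by push_cast; linarith)
  refine ⟨D ^ p + (2 * D) ^ p * (2 * D) ^ n, by positivity, fun u hu h0 _ hb t ht => ?_⟩
  have hts : t * C₁ = D * (t / C₂) := by field_simp [D]; ring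
  rw [inv_mul_le_iff₀ (by positivity), hts]
  have hmain := hu.sublevelIntegral_mul_le (μ := volume) h0 hD
    (div_pos ht (one_pos.trans_le h2)) (hb _) hp
  rwa [finrank_euclideanSpace_fin] at hmain

theorem sublevel_integral_comparison (n : ℕ) (hn : 2 ≤ n)
    (C₁ C₂ : ℝ) (h1 : 1 ≤ C₁) (h2 : 1 ≤ C₂) :
    ∃ C₃ > (0:ℝ), ∀ u : EuclideanSpace ℝ (Fin n) → ℝ,
      ConvexOn ℝ Set.univ u → u 0 = 0 → gradient u 0 = 0 →
      (∀ t : ℝ, IsBounded {x | u x < t}) →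
      ∀ t : ℝ, 0 < t →
        C₃⁻¹ * ∫ x in {x | u x < t * C₁}, |t * C₁ - u x| ^ ((n : ℝ) / (n - 1)) ≤
          ∫ x in {x | u x < t / C₂}, |t / C₂ - u x| ^ ((n : ℝ) / (n - 1)) :=
  sublevel_integral_comparison_general n C₁ C₂ h1 h2
end
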